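/- For each integer n ≥ 0, Σ_{i=0}^{n} i! · (n!/(n+i)!) · Σ_{j=0}^{i} (−1)^j C(n+i, i−j) S(n+j, j) = Σ_{j=0}^{n} (−1)^j · (C(n+1, j+1)/C(n+j, j)) · S(n+j, j). -/
import Mathlib


open Finset

/-- Stirling numbers of the second kind `S(n,k)`. -/
def stirling : ℕ → ℕ → ℕ
  | 0, 0 => 1
  | 0, _ + 1 => 0
  | _ + 1, 0 => 0
  | n + 1, k + 1 => (k + 1) * stirling n (k + 1) + stirling n k

lemma coeff_eq (n i j : ℕ) (hj : j ≤ i) :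
    (i.factorial : ℚ) * ((n.factorial : ℚ) / ((n + i).factorial : ℚ)) *
      ((n + i).choose (i - j) : ℚ) =
      ((n.factorial : ℚ) * (j.factorial : ℚ) / ((n + j).factorial : ℚ)) * (i.choose j : ℚ) := by
  have h1 : (n + i).choose (i - j) * (i - j).factorial * (n + j).factorial = (n + i).factorial := by
    have := Nat.choose_mul_factorial_mul_factorial (show i - j ≤ n + i by omega)
    rwa [show n + i - (i - j) = n + j by omega] at this
  have h2 : i.choose j * j.factorial * (i - j).factorial = i.factorial :=
    Nat.choose_mul_factorial_mul_factorial hj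
  have hni : ((n + i).factorial : ℚ) ≠ 0 := Nat.cast_ne_zero.mpr (Nat.factorial_ne_zero _)
  have hnj : ((n + j).factorial : ℚ) ≠ 0 := Nat.cast_ne_zero.mpr (Nat.factorial_ne_zero _)
  field_simp
  rw [← h2]
  push_cast [← h1]
  ring

theorem sum_interchange_identity (n : ℕ) :
    (∑ i ∈ Finset.range (n + 1), (i.factorial : ℚ) *
        ((n.factorial : ℚ) / ((n + i).factorial : ℚ)) *
        ∑ j ∈ Finset.range (i + 1),
          (-1 : ℚ) ^ j * ((n + i).choose (i - j) : ℚ) * (stirling (n + j) j : ℚ)) =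
      ∑ j ∈ Finset.range (n + 1),
        (-1 : ℚ) ^ j * (((n + 1).choose (j + 1) : ℚ) / ((n + j).choose j : ℚ)) *
          (stirling (n + j) j : ℚ) := by
  have swap :
      (∑ i ∈ Finset.range (n + 1), ∑ j ∈ Finset.range (i + 1),
        (i.factorial : ℚ) * ((n.factorial : ℚ) / ((n + i).factorial : ℚ)) *
          ((-1 : ℚ) ^ j * ((n + i).choose (i - j) : ℚ) * (stirling (n + j) j : ℚ))) =
      ∑ j ∈ Finset.range (n + 1), ∑ i ∈ Finset.Ico j (n + 1),
        (i.factorial : ℚ) * ((n.factorial : ℚ) / ((n + i).factorial : ℚ)) *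
          ((-1 : ℚ) ^ j * ((n + i).choose (i - j) : ℚ) * (stirling (n + j) j : ℚ)) := by
    have := Finset.sum_Ico_Ico_comm 0 (n + 1) (fun j i =>
      (i.factorial : ℚ) * ((n.factorial : ℚ) / ((n + i).factorial : ℚ)) *
        ((-1 : ℚ) ^ j * ((n + i).choose (i - j) : ℚ) * (stirling (n + j) j : ℚ)))
    simp only [Nat.Ico_zero_eq_range] at this
    rw [← this]
  calc
    (∑ i ∈ Finset.range (n + 1), (i.factorial : ℚ) *
        ((n.factorial : ℚ) / ((n + i).factorial : ℚ)) *
        ∑ j ∈ Finset.range (i + 1),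
          (-1 : ℚ) ^ j * ((n + i).choose (i - j) : ℚ) * (stirling (n + j) j : ℚ))
      = ∑ i ∈ Finset.range (n + 1), ∑ j ∈ Finset.range (i + 1),
        (i.factorial : ℚ) * ((n.factorial : ℚ) / ((n + i).factorial : ℚ)) *
          ((-1 : ℚ) ^ j * ((n + i).choose (i - j) : ℚ) * (stirling (n + j) j : ℚ)) := by
      simp [Finset.mul_sum]
    _ = ∑ j ∈ Finset.range (n + 1), ∑ i ∈ Finset.Ico j (n + 1),
        (i.factorial : ℚ) * ((n.factorial : ℚ) / ((n + i).factorial : ℚ)) *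
          ((-1 : ℚ) ^ j * ((n + i).choose (i - j) : ℚ) * (stirling (n + j) j : ℚ)) := swap
    _ = ∑ j ∈ Finset.range (n + 1),
        (-1 : ℚ) ^ j * (((n + 1).choose (j + 1) : ℚ) / ((n + j).choose j : ℚ)) *
          (stirling (n + j) j : ℚ) := by
      apply Finset.sum_congr rfl
      intro j hj
      rw [mem_range] at hj
      have key : ∀ i ∈ Finset.Ico j (n + 1),
          (i.factorial : ℚ) * ((n.factorial : ℚ) / ((n + i).factorial : ℚ)) *
            ((-1 : ℚ) ^ j * ((n + i).choose (i - j) : ℚ) * (stirling (n + j) j : ℚ)) =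
          ((n.factorial : ℚ) * (j.factorial : ℚ) / ((n + j).factorial : ℚ)) *
            ((-1 : ℚ) ^ j * (stirling (n + j) j : ℚ)) * (i.choose j : ℚ) := by
        intro i hi
        rw [mem_Ico] at hi
        have := coeff_eq n i j hi.1
        calc (i.factorial : ℚ) * ((n.factorial : ℚ) / ((n + i).factorial : ℚ)) *
              ((-1 : ℚ) ^ j * ((n + i).choose (i - j) : ℚ) * (stirling (n + j) j : ℚ))
            = (i.factorial : ℚ) * ((n.factorial : ℚ) / ((n + i).factorial : ℚ)) *
              ((n + i).choose (i - j) : ℚ) * ((-1 : ℚ) ^ j * (stirling (n + j) j : ℚ)) := by ring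
          _ = _ := by rw [this]; ring
      rw [Finset.sum_congr rfl key, ← Finset.mul_sum]
      have hs : (∑ i ∈ Finset.Ico j (n + 1), (i.choose j : ℚ)) = ((n + 1).choose (j + 1) : ℚ) := by
        rw [← Nat.cast_sum]
        congr 1
        rw [Finset.Ico_add_one_right_eq_Icc]
        exact Nat.sum_Icc_choose n j
      rw [hs]
      have hchoose : ((n + j).choose j : ℚ) * ((n.factorial : ℚ) * (j.factorial : ℚ)) =
          ((n + j).factorial : ℚ) := by
        have := Nat.choose_mul_factorial_mul_factorial (show j ≤ n + j by omega)
        rw [show n + j - j = n by omega] at this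
        push_cast [← this]
        ring
      have hc0 : ((n + j).choose j : ℚ) ≠ 0 :=
        Nat.cast_ne_zero.mpr (Nat.choose_pos (Nat.le_add_left j n)).ne'
      have hnj : ((n + j).factorial : ℚ) ≠ 0 := Nat.cast_ne_zero.mpr (Nat.factorial_ne_zero _)
      field_simp
      rw [← hchoose]
      ring
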